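/- Let A ∈ C³(ℝ,ℝ) be independent of t and y: ℝ×[0,T] → ℂ smooth. Then pointwise, A ȳ_{xxx}(i y_t + y_{xxxx}) + A y_{xxx}(−i ȳ_t + ȳ_{xxxx}) = ∂_x[(−iA)(y_{xx}ȳ_t − ȳ_{xx} y_t) − (−iA_x)(y_x ȳ_t − ȳ_x y_t) + (1/2)(−iA_{xx})(y ȳ_t − ȳ y_t) − (1/2)(−iA)(y_x ∂_t ȳ_x − ȳ_x ∂_t y_x) + A|y_{xxx}|²] + (1/2)∂_t[(−iA)(y_x ȳ_{xx} − ȳ_x y_{xx}) − (−iA_{xx})(y ȳ_x − ȳ y_x)] − (3/2)(−iA_x)(ȳ_x ∂_t y_x − y_x ∂_t ȳ_x) + (1/2)(−iA_{xxx})(ȳ ∂_t y − y ∂_t ȳ) − A_x |y_{xxx}|². -/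

import Mathlib

open Complex

noncomputable def pdx {E : Type*} [NormedAddCommGroup E] [NormedSpace ℝ E]
    (f : ℝ → ℝ → E) : ℝ → ℝ → E := fun x t => deriv (fun x' => f x' t) x

noncomputable def pdt {E : Type*} [NormedAddCommGroup E] [NormedSpace ℝ E]
    (f : ℝ → ℝ → E) : ℝ → ℝ → E := fun x t => deriv (fun t' => f x t') t

local notation "conj'" => (starRingEnd ℂ)

section helpers

variable {g : ℝ → ℝ → ℂ}

lemma pdx_hasDerivAt (hg : ContDiff ℝ (⊤ : ℕ∞) (Function.uncurry g)) (x t : ℝ) :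
    HasDerivAt (fun x' => g x' t) (pdx g x t) x := by
  have h : DifferentiableAt ℝ (fun x' => g x' t) x := by
    have := (hg.differentiable (by simp) (x, t)).comp x
      (DifferentiableAt.prodMk (differentiableAt_fun_id (𝕜 := ℝ) (x := x)) (differentiableAt_const t))
    exact this
  exact h.hasDerivAt

lemma pdt_hasDerivAt (hg : ContDiff ℝ (⊤ : ℕ∞) (Function.uncurry g)) (x t : ℝ) :
    HasDerivAt (fun t' => g x t') (pdt g x t) t := by
  have h : DifferentiableAt ℝ (fun t' => g x t') t :=
    (hg.differentiable (by simp) (x, t)).comp t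
      (DifferentiableAt.prodMk (differentiableAt_const x) differentiableAt_id)
  exact h.hasDerivAt

lemma pdx_eq_fderiv (hg : ContDiff ℝ (⊤ : ℕ∞) (Function.uncurry g)) (x t : ℝ) :
    pdx g x t = fderiv ℝ (Function.uncurry g) (x, t) (1, 0) := by
  have h1 : HasDerivAt (fun x' => g x' t)
      (fderiv ℝ (Function.uncurry g) (x, t) ((1 : ℝ), (0 : ℝ))) x := by
    have := (hg.differentiable (by simp) (x, t)).hasFDerivAt.comp_hasDerivAt x
      (HasDerivAt.prodMk (hasDerivAt_id' (x := x)) (hasDerivAt_const x t))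
    exact this
  exact (pdx_hasDerivAt hg x t).unique h1

lemma pdt_eq_fderiv (hg : ContDiff ℝ (⊤ : ℕ∞) (Function.uncurry g)) (x t : ℝ) :
    pdt g x t = fderiv ℝ (Function.uncurry g) (x, t) (0, 1) := by
  have h1 : HasDerivAt (fun t' => g x t')
      (fderiv ℝ (Function.uncurry g) (x, t) ((0 : ℝ), (1 : ℝ))) t :=
    (hg.differentiable (by simp) (x, t)).hasFDerivAt.comp_hasDerivAt t
      (HasDerivAt.prodMk (hasDerivAt_const t x) (hasDerivAt_id t))
  exact (pdt_hasDerivAt hg x t).unique h1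

lemma contDiff_pdx (hg : ContDiff ℝ (⊤ : ℕ∞) (Function.uncurry g)) :
    ContDiff ℝ (⊤ : ℕ∞) (Function.uncurry (pdx g)) := by
  have h : Function.uncurry (pdx g)
      = fun p : ℝ × ℝ => fderiv ℝ (Function.uncurry g) p (1, 0) := by
    funext p
    exact pdx_eq_fderiv hg p.1 p.2
  rw [h]
  exact (hg.fderiv_right (by simp)).clm_apply contDiff_const

lemma contDiff_pdt (hg : ContDiff ℝ (⊤ : ℕ∞) (Function.uncurry g)) :
    ContDiff ℝ (⊤ : ℕ∞) (Function.uncurry (pdt g)) := by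
  have h : Function.uncurry (pdt g)
      = fun p : ℝ × ℝ => fderiv ℝ (Function.uncurry g) p (0, 1) := by
    funext p
    exact pdt_eq_fderiv hg p.1 p.2
  rw [h]
  exact (hg.fderiv_right (by simp)).clm_apply contDiff_const

lemma pdt_pdx_comm (hg : ContDiff ℝ (⊤ : ℕ∞) (Function.uncurry g)) :
    pdt (pdx g) = pdx (pdt g) := by
  funext x t
  set F := Function.uncurry g with hF
  have hD : ContDiff ℝ (⊤ : ℕ∞) (fderiv ℝ F) := hg.fderiv_right (by simp)
  have hsymm : ∀ v w, fderiv ℝ (fderiv ℝ F) (x, t) v w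
      = fderiv ℝ (fderiv ℝ F) (x, t) w v :=
    second_derivative_symmetric
      (fun p => (hg.differentiable (by simp) p).hasFDerivAt)
      ((hD.differentiable (by simp) (x, t)).hasFDerivAt)
  have h1 : pdt (pdx g) x t = fderiv ℝ (fderiv ℝ F) (x, t) (0, 1) (1, 0) := by
    have e : (fun t' => pdx g x t') = fun t' => fderiv ℝ F (x, t') (1, 0) := by
      funext t'; exact pdx_eq_fderiv hg x t'
    have hc : HasDerivAt (fun t' => fderiv ℝ F (x, t'))
        (fderiv ℝ (fderiv ℝ F) (x, t) ((0 : ℝ), (1 : ℝ))) t :=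
      (hD.differentiable (by simp) (x, t)).hasFDerivAt.comp_hasDerivAt t
        (HasDerivAt.prodMk (hasDerivAt_const t x) (hasDerivAt_id t))
    have happ := hc.clm_apply (hasDerivAt_const t ((1 : ℝ), (0 : ℝ)))
    simp only [map_zero, add_zero] at happ
    rw [← e] at happ
    exact (pdt_hasDerivAt (contDiff_pdx hg) x t).unique happ
  have h2 : pdx (pdt g) x t = fderiv ℝ (fderiv ℝ F) (x, t) (1, 0) (0, 1) := by
    have e : (fun x' => pdt g x' t) = fun x' => fderiv ℝ F (x', t) (0, 1) := by
      funext x'; exact pdt_eq_fderiv hg x' t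
    have hc : HasDerivAt (fun x' => fderiv ℝ F (x', t))
        (fderiv ℝ (fderiv ℝ F) (x, t) ((1 : ℝ), (0 : ℝ))) x :=
      (hD.differentiable (by simp) (x, t)).hasFDerivAt.comp_hasDerivAt x
        (HasDerivAt.prodMk (hasDerivAt_id x) (hasDerivAt_const x t))
    have happ := hc.clm_apply (hasDerivAt_const x ((0 : ℝ), (1 : ℝ)))
    simp only [map_zero, add_zero] at happ
    rw [← e] at happ
    exact (pdx_hasDerivAt (contDiff_pdt hg) x t).unique happ
  rw [h1, h2, hsymm]

end helpers

/-- Deterministic multiplier identity (second identity of Lemma 3.1):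
`A ȳ_{xxx}(i y_t + y_{xxxx}) + A y_{xxx}(−i ȳ_t + ȳ_{xxxx})` equals the stated
divergence-form expression. -/
theorem multiplier_identity_second
    (A : ℝ → ℝ) (hA : ContDiff ℝ 3 A)
    (y : ℝ → ℝ → ℂ) (hy : ContDiff ℝ (⊤ : ℕ∞) (Function.uncurry y)) :
    ∀ x t : ℝ,
      (A x : ℂ) * conj' (pdx (pdx (pdx y)) x t)
          * (Complex.I * pdt y x t + pdx (pdx (pdx (pdx y))) x t)
        + (A x : ℂ) * pdx (pdx (pdx y)) x t
            * (-Complex.I * conj' (pdt y x t) + conj' (pdx (pdx (pdx (pdx y))) x t))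
      = pdx (fun x' t' =>
            (-Complex.I * (A x' : ℂ))
                * (pdx (pdx y) x' t' * conj' (pdt y x' t')
                  - conj' (pdx (pdx y) x' t') * pdt y x' t')
              - (-Complex.I * ((deriv A x' : ℝ) : ℂ))
                  * (pdx y x' t' * conj' (pdt y x' t')
                    - conj' (pdx y x' t') * pdt y x' t')
              + (1 / 2 : ℂ) * (-Complex.I * ((deriv (deriv A) x' : ℝ) : ℂ))
                  * (y x' t' * conj' (pdt y x' t') - conj' (y x' t') * pdt y x' t')
              - (1 / 2 : ℂ) * (-Complex.I * (A x' : ℂ))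
                  * (pdx y x' t' * conj' (pdt (pdx y) x' t')
                    - conj' (pdx y x' t') * pdt (pdx y) x' t')
              + ((A x' * Complex.normSq (pdx (pdx (pdx y)) x' t') : ℝ) : ℂ)) x t
        + (1 / 2 : ℂ) * pdt (fun x' t' =>
            (-Complex.I * (A x' : ℂ))
                * (pdx y x' t' * conj' (pdx (pdx y) x' t')
                  - conj' (pdx y x' t') * pdx (pdx y) x' t')
              - (-Complex.I * ((deriv (deriv A) x' : ℝ) : ℂ))
                  * (y x' t' * conj' (pdx y x' t') - conj' (y x' t') * pdx y x' t')) x t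
        - (3 / 2 : ℂ) * (-Complex.I * ((deriv A x : ℝ) : ℂ))
            * (conj' (pdx y x t) * pdt (pdx y) x t
              - pdx y x t * conj' (pdt (pdx y) x t))
        + (1 / 2 : ℂ) * (-Complex.I * ((deriv (deriv (deriv A)) x : ℝ) : ℂ))
            * (conj' (y x t) * pdt y x t - y x t * conj' (pdt y x t))
        - ((deriv A x * Complex.normSq (pdx (pdx (pdx y)) x t) : ℝ) : ℂ) := by
  intro x t
  -- regularity of A
  have hAd : ContDiff ℝ 2 (deriv A) :=
    (contDiff_succ_iff_deriv.mp (hA.of_le (by norm_num))).2.2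
  have hAd2 : ContDiff ℝ 1 (deriv (deriv A)) :=
    (contDiff_succ_iff_deriv.mp (hAd.of_le (by norm_num))).2.2
  have hAx : HasDerivAt A (deriv A x) x :=
    ((hA.differentiable (by norm_num)) x).hasDerivAt
  have hA1x : HasDerivAt (deriv A) (deriv (deriv A) x) x :=
    ((hAd.differentiable (by norm_num)) x).hasDerivAt
  have hA2x : HasDerivAt (deriv (deriv A)) (deriv (deriv (deriv A)) x) x :=
    ((hAd2.differentiable (by norm_num)) x).hasDerivAt
  -- regularity of y and its partial derivatives
  have hyx := contDiff_pdx hy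
  have hyxx := contDiff_pdx hyx
  have hyxxx := contDiff_pdx hyxx
  have hyt := contDiff_pdt hy
  have hyxt := contDiff_pdt hyx
  -- spatial derivatives at (x, t)
  have hu0x := pdx_hasDerivAt hy x t
  have hu1x := pdx_hasDerivAt hyx x t
  have hu2x := pdx_hasDerivAt hyxx x t
  have hu3x := pdx_hasDerivAt hyxxx x t
  have hm0x := pdx_hasDerivAt hyt x t
  have hm1x := pdx_hasDerivAt hyxt x t
  -- time derivatives at (x, t)
  have hu0t := pdt_hasDerivAt hy x t
  have hu1t := pdt_hasDerivAt hyx x t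
  have hu2t := pdt_hasDerivAt hyxx x t
  -- normalize conjugation and |y_{xxx}|²
  simp only [starRingEnd_apply, Complex.ofReal_mul, ← Complex.mul_conj]
  -- compute the spatial divergence term
  have Ex : pdx (fun x' t' =>
        -Complex.I * ((A x' : ℝ) : ℂ)
            * (pdx (pdx y) x' t' * star (pdt y x' t')
              - star (pdx (pdx y) x' t') * pdt y x' t')
          - -Complex.I * ((deriv A x' : ℝ) : ℂ)
              * (pdx y x' t' * star (pdt y x' t')
                - star (pdx y x' t') * pdt y x' t')
          + (1 / 2 : ℂ) * (-Complex.I * ((deriv (deriv A) x' : ℝ) : ℂ))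
              * (y x' t' * star (pdt y x' t') - star (y x' t') * pdt y x' t')
          - (1 / 2 : ℂ) * (-Complex.I * ((A x' : ℝ) : ℂ))
              * (pdx y x' t' * star (pdt (pdx y) x' t')
                - star (pdx y x' t') * pdt (pdx y) x' t')
          + ((A x' : ℝ) : ℂ)
              * (pdx (pdx (pdx y)) x' t' * star (pdx (pdx (pdx y)) x' t'))) x t
      = _ :=
    HasDerivAt.deriv
      (((((((hAx.ofReal_comp.const_mul (-Complex.I)).mul
              ((hu2x.mul hm0x.star).sub (hu2x.star.mul hm0x))).sub
            ((hA1x.ofReal_comp.const_mul (-Complex.I)).mul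
              ((hu1x.mul hm0x.star).sub (hu1x.star.mul hm0x)))).add
          (((hA2x.ofReal_comp.const_mul (-Complex.I)).const_mul (1 / 2 : ℂ)).mul
            ((hu0x.mul hm0x.star).sub (hu0x.star.mul hm0x)))).sub
        (((hAx.ofReal_comp.const_mul (-Complex.I)).const_mul (1 / 2 : ℂ)).mul
          ((hu1x.mul hm1x.star).sub (hu1x.star.mul hm1x)))).add
      (hAx.ofReal_comp.mul (hu3x.mul hu3x.star))))
  -- compute the time derivative term
  have Et : pdt (fun x' t' =>
        -Complex.I * ((A x' : ℝ) : ℂ)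
            * (pdx y x' t' * star (pdx (pdx y) x' t')
              - star (pdx y x' t') * pdx (pdx y) x' t')
          - -Complex.I * ((deriv (deriv A) x' : ℝ) : ℂ)
              * (y x' t' * star (pdx y x' t') - star (y x' t') * pdx y x' t')) x t
      = _ :=
    HasDerivAt.deriv
      ((((hu1t.mul hu2t.star).sub (hu1t.star.mul hu2t)).const_mul
          (-Complex.I * ((A x : ℝ) : ℂ))).sub
        (((hu0t.mul hu1t.star).sub (hu0t.star.mul hu1t)).const_mul
          (-Complex.I * ((deriv (deriv A) x : ℝ) : ℂ))))
  rw [Ex, Et]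
  have c1 : pdt (pdx y) = pdx (pdt y) := pdt_pdx_comm hy
  have c2 : pdt (pdx (pdx y)) = pdx (pdx (pdt y)) :=
    (pdt_pdx_comm hyx).trans (congrArg pdx c1)
  rw [c1, c2]
  simp only [Pi.mul_apply, Pi.sub_apply]
  ring
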